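/- Let n ≥ 1 and let Y be an (n−1)-dimensional F-subspace of H₀. Then the number of nontrivial characters χ of the additive group F^n such that p(χ)(Ŷ) is not the zero function (equivalently, such that X(χ) = Y) equals q − 1. -/

import Mathlib

open Module

noncomputable def H0 (F : Type) [Field F] (n : ℕ) : Submodule F (Fin (n + 1) → F) :=
  LinearMap.ker (LinearMap.proj (R := F) (φ := fun _ : Fin (n + 1) => F) (Fin.last n))

def gmap (F : Type) [Field F] (n : ℕ) (a : Fin n → F) :
    (Fin (n + 1) → F) →ₗ[F] (Fin (n + 1) → F) where
  toFun v := v + v (Fin.last n) • (Fin.snoc a 0 : Fin (n + 1) → F)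
  map_add' u v := by
    funext i
    simp only [Pi.add_apply, Pi.smul_apply, smul_eq_mul]
    ring
  map_smul' c v := by
    funext i
    simp only [Pi.add_apply, Pi.smul_apply, smul_eq_mul, RingHom.id_apply]
    ring


open Classical in
/-- `pchi F n χ X` is the function `p(χ)(X) : B_q(n+1) → ℂ` whose value at `Z` is
`∑_{a : g_a(X) = Z} conj (χ a)`; it vanishes off the orbit of `X`. -/
noncomputable def pchi (F : Type) [Field F] [Fintype F] (n : ℕ)
    (χ : AddChar (Fin n → F) ℂ) (X : Submodule F (Fin (n + 1) → F)) :
    Submodule F (Fin (n + 1) → F) → ℂ :=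
  fun Z => ∑ a : Fin n → F,
    if Submodule.map (gmap F n a) X = Z then (starRingEnd ℂ) (χ a) else 0

/-- For a subspace `X ⊆ H₀`, `hatX F n X` is the subspace `X̂` of `F^{n+1}` spanned by `X`
and the last standard basis vector `e_{n+1}`. -/
noncomputable def hatX (F : Type) [Field F] (n : ℕ) (X : Submodule F (Fin (n + 1) → F)) :
    Submodule F (Fin (n + 1) → F) :=
  X ⊔ Submodule.span F {Pi.single (Fin.last n) (1 : F)}

/-!
The translations `g_a` act on `Ŷ` with stabilizer `S = {a | (a, 0) ∈ Y}`, a hyperplane of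
`F^n`. Since `p(χ)(Ŷ)` is supported on the orbit of `Ŷ`, its value at `g_c(Ŷ)` is a sum of
`conj χ` over the coset `c + S`, which vanishes unless `χ` is trivial on `S`; conversely, if `χ`
is trivial on `S` then `p(χ)(Ŷ)(Ŷ) = |S| ≠ 0`. Characters trivial on `S` are pulled back from
the characters of `F^n / S ≅ F`, of which `q - 1` are nontrivial.
-/

open scoped Finset

namespace AddChar

variable {A B M : Type*}

lemma sum_ite_eq_zero_of_shift_invariant [AddGroup A] [Fintype A] [CommRing M] [IsDomain M]
    (ψ : AddChar A M) (P : A → Prop) [DecidablePred P] {s : A} (hP : ∀ a, P (a + s) ↔ P a)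
    (hs : ψ s ≠ 1) : ∑ a, (if P a then ψ a else 0) = 0 := by
  have hT : ψ s * ∑ a, (if P a then ψ a else 0) = ∑ a, (if P a then ψ a else 0) := by
    rw [Finset.mul_sum, ← Equiv.sum_comp (Equiv.addRight s) (fun a => if P a then ψ a else 0)]
    refine Finset.sum_congr rfl fun a _ => ?_
    simp only [Equiv.coe_addRight, hP, map_add_eq_mul, mul_comm (ψ s), ite_mul, zero_mul]
  exact (mul_left_eq_self₀.mp hT).resolve_left hs

lemma compAddMonoidHom_rightInverse_eq_self [AddGroup A] [AddGroup B] [Monoid M]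
    (χ : AddChar A M) {f : A →+ B} {g : B →+ A} (hfg : Function.RightInverse g f)
    (hχ : ∀ a, f a = 0 → χ a = 1) : (χ.compAddMonoidHom g).compAddMonoidHom f = χ := by
  ext a
  have hker : f (-g (f a) + a) = 0 := by rw [map_add, map_neg, hfg, neg_add_cancel]
  calc χ (g (f a)) = χ (g (f a)) * χ (-g (f a) + a) := by rw [hχ _ hker, mul_one]
    _ = χ a := by rw [← map_add_eq_mul, add_neg_cancel_left]

def neOneTrivialOnKerEquiv [AddGroup A] [AddGroup B] [Monoid M] (f : A →+ B) (g : B →+ A)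
    (hfg : Function.RightInverse g f) :
    {χ : AddChar A M // χ ≠ 1 ∧ ∀ a, f a = 0 → χ a = 1} ≃ {ψ : AddChar B M // ψ ≠ 1} where
  toFun χ := ⟨χ.1.compAddMonoidHom g, fun h => χ.2.1 <| by
    rw [← χ.1.compAddMonoidHom_rightInverse_eq_self hfg χ.2.2, h]; rfl⟩
  invFun ψ := ⟨ψ.1.compAddMonoidHom f, fun h => ψ.2 <| by
      ext b; simpa [hfg b] using DFunLike.congr_fun h (g b),
    fun a ha => by simp [ha]⟩
  left_inv χ := Subtype.ext (χ.1.compAddMonoidHom_rightInverse_eq_self hfg χ.2.2)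
  right_inv ψ := Subtype.ext <| by ext b; simp [hfg b]

end AddChar

section Hyperplane

variable {K V : Type*} [Field K] [AddCommGroup V] [Module K V]

lemma exists_surjective_ker_eq_of_finrank_add_one [FiniteDimensional K V] {S : Submodule K V}
    (hS : finrank K S + 1 = finrank K V) :
    ∃ f : V →ₗ[K] K, Function.Surjective f ∧ LinearMap.ker f = S := by
  have hquot : finrank K (V ⧸ S) = finrank K K := by
    have := S.finrank_quotient_add_finrank
    rw [finrank_self]
    omega
  obtain ⟨e⟩ := FiniteDimensional.nonempty_linearEquiv_of_finrank_eq hquot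
  refine ⟨e.toLinearMap ∘ₗ S.mkQ, e.surjective.comp S.mkQ_surjective, ?_⟩
  rw [LinearMap.ker_comp, LinearEquiv.ker, Submodule.comap_bot, Submodule.ker_mkQ]

theorem card_addChar_ne_one_trivial_on_of_finrank_add_one [Fintype K] [FiniteDimensional K V]
    {S : Submodule K V} (hS : finrank K S + 1 = finrank K V) :
    Nat.card {χ : AddChar V ℂ // χ ≠ 1 ∧ ∀ s ∈ S, χ s = 1} = Fintype.card K - 1 := by
  classical
  obtain ⟨f, hf, rfl⟩ := exists_surjective_ker_eq_of_finrank_add_one hS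
  obtain ⟨v₀, hv₀⟩ := hf 1
  have hfg (x : K) : f (LinearMap.toSpanSingleton K V v₀ x) = x := by simp [hv₀]
  refine (Nat.card_congr (AddChar.neOneTrivialOnKerEquiv f.toAddMonoidHom
    (LinearMap.toSpanSingleton K V v₀).toAddMonoidHom hfg)).trans ?_
  rw [Nat.card_eq_fintype_card, Fintype.card_subtype_compl, Fintype.card_subtype_eq,
    AddChar.card_eq]

end Hyperplane

/-- The identification of `F^n` with `H₀`. -/
def snocZero (R : Type*) [Semiring R] (n : ℕ) : (Fin n → R) →ₗ[R] (Fin (n + 1) → R) where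
  toFun a := Fin.snoc a 0
  map_add' a b := by
    funext i
    refine Fin.lastCases ?_ (fun j => ?_) i <;> simp
  map_smul' c a := by
    funext i
    refine Fin.lastCases ?_ (fun j => ?_) i <;> simp

section Translations

variable {F : Type} [Field F] {n : ℕ}

@[simp]
lemma snocZero_apply (a : Fin n → F) : snocZero F n a = Fin.snoc a 0 := rfl

lemma snocZero_injective : Function.Injective (snocZero F n) := fun a b h =>
  funext fun i => by simpa using congrFun h (Fin.castSucc i)

lemma mem_H0_iff {v : Fin (n + 1) → F} : v ∈ H0 F n ↔ v (Fin.last n) = 0 := Iff.rfl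

lemma H0_le_range_snocZero : H0 F n ≤ LinearMap.range (snocZero F n) := fun v hv =>
  ⟨Fin.init v, funext fun i =>
    Fin.lastCases (by simp [mem_H0_iff.mp hv]) (fun j => by simp [Fin.init]) i⟩

lemma finrank_comap_snocZero {Y : Submodule F (Fin (n + 1) → F)} (hY : Y ≤ H0 F n) :
    finrank F (Y.comap (snocZero F n)) = finrank F Y := by
  rw [(Submodule.equivMapOfInjective _ snocZero_injective _).finrank_eq,
    Submodule.map_comap_eq_of_le (hY.trans H0_le_range_snocZero)]

lemma gmap_apply (a : Fin n → F) (v : Fin (n + 1) → F) :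
    gmap F n a v = v + v (Fin.last n) • snocZero F n a := rfl

lemma gmap_apply_last (a : Fin n → F) (v : Fin (n + 1) → F) :
    gmap F n a v (Fin.last n) = v (Fin.last n) := by
  simp [gmap_apply]

lemma gmap_add (a b : Fin n → F) : gmap F n (a + b) = gmap F n a ∘ₗ gmap F n b := by
  refine LinearMap.ext fun v => ?_
  rw [LinearMap.comp_apply, gmap_apply a, gmap_apply_last, gmap_apply, gmap_apply, map_add,
    smul_add]
  abel

lemma gmap_zero : gmap F n 0 = LinearMap.id :=
  LinearMap.ext fun v => by rw [gmap_apply, map_zero, smul_zero, add_zero, LinearMap.id_apply]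

lemma map_gmap_add (a b : Fin n → F) (X : Submodule F (Fin (n + 1) → F)) :
    X.map (gmap F n (a + b)) = (X.map (gmap F n b)).map (gmap F n a) := by
  rw [gmap_add, Submodule.map_comp]

variable {Y : Submodule F (Fin (n + 1) → F)}

lemma single_last_mem_hatX : Pi.single (Fin.last n) (1 : F) ∈ hatX F n Y :=
  Submodule.mem_sup_right (Submodule.mem_span_singleton_self _)

lemma mem_of_mem_hatX_of_mem_H0 (hY : Y ≤ H0 F n) {v : Fin (n + 1) → F}
    (hv : v ∈ hatX F n Y) (h0 : v ∈ H0 F n) : v ∈ Y := by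
  obtain ⟨y, hy, z, hz, rfl⟩ := Submodule.mem_sup.mp hv
  obtain ⟨t, rfl⟩ := Submodule.mem_span_singleton.mp hz
  have ht : t = 0 := by simpa [mem_H0_iff, mem_H0_iff.mp (hY hy)] using h0
  simpa [ht] using hy

lemma map_gmap_hatX_le {a : Fin n → F} (ha : snocZero F n a ∈ Y) :
    (hatX F n Y).map (gmap F n a) ≤ hatX F n Y := by
  rintro _ ⟨w, hw, rfl⟩
  exact Submodule.add_mem _ hw (Submodule.smul_mem _ _ (Submodule.mem_sup_left ha))

lemma map_gmap_hatX_eq_iff (hY : Y ≤ H0 F n) (a : Fin n → F) :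
    (hatX F n Y).map (gmap F n a) = hatX F n Y ↔ snocZero F n a ∈ Y := by
  refine ⟨fun h => ?_, fun ha => (map_gmap_hatX_le ha).antisymm ?_⟩
  · have he : gmap F n a (Pi.single (Fin.last n) 1) ∈ hatX F n Y :=
      h ▸ Submodule.mem_map_of_mem single_last_mem_hatX
    rw [gmap_apply, Pi.single_eq_same, one_smul] at he
    refine mem_of_mem_hatX_of_mem_H0 hY ?_ (by simp [mem_H0_iff])
    simpa using Submodule.sub_mem _ he single_last_mem_hatX
  · have hna : snocZero F n (-a) ∈ Y := by rw [map_neg]; exact Y.neg_mem ha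
    calc hatX F n Y = ((hatX F n Y).map (gmap F n (-a))).map (gmap F n a) := by
          rw [← map_gmap_add, add_neg_cancel, gmap_zero, Submodule.map_id]
      _ ≤ (hatX F n Y).map (gmap F n a) := Submodule.map_mono (map_gmap_hatX_le hna)

end Translations

section Characters

variable {F : Type} [Field F] [Fintype F] {n : ℕ} {Y : Submodule F (Fin (n + 1) → F)}

open Classical in
lemma pchi_hatX_self (hY : Y ≤ H0 F n) (χ : AddChar (Fin n → F) ℂ)
    (hχ : ∀ s ∈ Y.comap (snocZero F n), χ s = 1) :
    pchi F n χ (hatX F n Y) (hatX F n Y) = #{a | snocZero F n a ∈ Y} := by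
  rw [pchi, ← Finset.sum_boole]
  refine Finset.sum_congr rfl fun a _ => ?_
  rw [if_congr (map_gmap_hatX_eq_iff hY a) rfl rfl]
  split_ifs with ha
  · rw [hχ a ha, map_one]
  · rfl

lemma pchi_hatX_eq_zero (hY : Y ≤ H0 F n) (χ : AddChar (Fin n → F) ℂ) {s : Fin n → F}
    (hs : s ∈ Y.comap (snocZero F n)) (hχs : χ s ≠ 1) : pchi F n χ (hatX F n Y) = 0 :=
  funext fun Z => AddChar.sum_ite_eq_zero_of_shift_invariant
    ((starRingEnd ℂ).toMonoidHom.compAddChar χ) _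
    (fun a => by rw [map_gmap_add, (map_gmap_hatX_eq_iff hY s).mpr hs])
    ((map_ne_one_iff _ (starRingEnd ℂ).injective).mpr hχs)

theorem pchi_hatX_ne_zero_iff (hY : Y ≤ H0 F n) (χ : AddChar (Fin n → F) ℂ) :
    pchi F n χ (hatX F n Y) ≠ 0 ↔ ∀ s ∈ Y.comap (snocZero F n), χ s = 1 := by
  classical
  refine ⟨fun h s hs => by_contra fun hχs => h (pchi_hatX_eq_zero hY χ hs hχs), fun h h0 => ?_⟩
  have hcard := pchi_hatX_self hY χ h
  rw [h0, Pi.zero_apply, eq_comm, Nat.cast_eq_zero, Finset.card_eq_zero] at hcard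
  have h0mem : (0 : Fin n → F) ∈ Y.comap (snocZero F n) := Submodule.zero_mem _
  exact Finset.eq_empty_iff_forall_notMem.mp hcard 0 ((Finset.mem_filter_univ 0).mpr h0mem)

end Characters

theorem stmt_17 (q n : ℕ) (F : Type) [Field F] [Fintype F] (hq : Fintype.card F = q)
    (hn : 1 ≤ n) (Y : Submodule F (Fin (n + 1) → F)) (hY : Y ≤ H0 F n)
    (hdim : finrank F Y = n - 1) :
    Nat.card {χ : AddChar (Fin n → F) ℂ //
      (∃ a, χ a ≠ 1) ∧ pchi F n χ (hatX F n Y) ≠ 0} = q - 1 := by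
  have hS : finrank F (Y.comap (snocZero F n)) + 1 = finrank F (Fin n → F) := by
    rw [finrank_comap_snocZero hY, hdim, finrank_fin_fun]
    omega
  have hcond (χ : AddChar (Fin n → F) ℂ) :
      ((∃ a, χ a ≠ 1) ∧ pchi F n χ (hatX F n Y) ≠ 0) ↔
        (χ ≠ 1 ∧ ∀ s ∈ Y.comap (snocZero F n), χ s = 1) := by
    rw [AddChar.ne_one_iff, pchi_hatX_ne_zero_iff hY]
  rw [Nat.card_congr (Equiv.subtypeEquivRight hcond),
    card_addChar_ne_one_trivial_on_of_finrank_add_one hS, hq]
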